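/- Let k₁, k₂ ≥ 2 and let 𝒜 be a relational structure whose universe is {0,…,k₁−1}×{0,…,k₂−1} and whose Gaifman graph is exactly the k₁×k₂ grid graph, and suppose each of the four corners (0,0), (0,k₂−1), (k₁−1,0), (k₁−1,k₂−1) is domain restricted in 𝒜. Then every homomorphism from 𝒜 to 𝒜 is the identity map; in particular, there is no homomorphism from 𝒜 to a proper substructure of 𝒜, so 𝒜 is a core. -/

import Mathlib

open Set

/-- A relational structure over vocabulary `σ` (with arities `ar`) and universe `A`. -/
structure RelStruct (σ : Type) (ar : σ → ℕ) (A : Type) where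
  rel : ∀ R : σ, Set (Fin (ar R) → A)

variable {σ : Type} {ar : σ → ℕ} {A B : Type}

/-- `h` is a homomorphism from `𝒜` to `ℬ`. -/
def IsHom (𝒜 : RelStruct σ ar A) (ℬ : RelStruct σ ar B) (h : A → B) : Prop :=
  ∀ R : σ, ∀ t ∈ 𝒜.rel R, (fun i => h (t i)) ∈ ℬ.rel R

/-- `𝒜^ℬ[X]`: the set of restrictions to `X` of homomorphisms from `𝒜` to `ℬ`. -/
def homRestrict (𝒜 : RelStruct σ ar A) (ℬ : RelStruct σ ar B) (X : Set A) :
    Set (↥X → B) :=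
  { g | ∃ h : A → B, IsHom 𝒜 ℬ h ∧ g = X.restrict h }

/-- `𝒜'` is a (relation-wise) substructure of `𝒜`. -/
def SubStructOf (𝒜' 𝒜 : RelStruct σ ar A) : Prop :=
  ∀ R : σ, 𝒜'.rel R ⊆ 𝒜.rel R

/-- `𝒜'` is a core of `𝒜`. -/
def IsCoreOf (𝒜' 𝒜 : RelStruct σ ar A) : Prop :=
  SubStructOf 𝒜' 𝒜 ∧ (∃ h : A → A, IsHom 𝒜 𝒜' h) ∧
    ∀ 𝒜'' : RelStruct σ ar A, SubStructOf 𝒜'' 𝒜' → 𝒜'' ≠ 𝒜' →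
      ¬ ∃ h : A → A, IsHom 𝒜 𝒜'' h

/-- `X` is domain restricted in `𝒜`, with (unary) domain-constraint symbol `dR`. -/
def DomRestricted (𝒜 : RelStruct σ ar A) (dR : σ) (X : A) : Prop :=
  ar dR = 1 ∧ 𝒜.rel dR = {fun _ => X}

/-- A view structure (v-structure) for `𝒜`, over the vocabulary `ν` of views:
each view `v` has a set of variables (the entries of its single defining tuple),
and every constraint of `𝒜` has a base view. -/
structure ViewStruct (σ : Type) (ar : σ → ℕ) (A : Type) (𝒜 : RelStruct σ ar A)
    (ν : Type) where
  vars : ν → Set A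
  base : ∀ R : σ, ∀ t : Fin (ar R) → A, t ∈ 𝒜.rel R → ν
  base_vars : ∀ R t ht, vars (base R t ht) = Set.range t

variable {ν : Type} {𝒜 : RelStruct σ ar A}

/-- Restriction of an assignment on `W` to a subset `S ⊆ W`. -/
def restr {W S : Set A} (hSW : S ⊆ W) (g : ↥W → B) : ↥S → B :=
  fun x => g ⟨x.1, hSW x.2⟩

/-- `BV` (a τ_V-structure, given as a set of assignments for each view) is legal
w.r.t. `V` and the instance `(𝒜,ℬ)`. -/
def Legal (𝒜 : RelStruct σ ar A) (ℬ : RelStruct σ ar B)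
    (V : ViewStruct σ ar A 𝒜 ν) (BV : ∀ v : ν, Set (↥(V.vars v) → B)) : Prop :=
  (∀ v : ν, homRestrict 𝒜 ℬ (V.vars v) ⊆ BV v) ∧
  (∀ (R : σ) (t : Fin (ar R) → A) (ht : t ∈ 𝒜.rel R),
     ∀ g ∈ BV (V.base R t ht),
       (fun i => g ⟨t i, by rw [V.base_vars]; exact Set.mem_range_self i⟩) ∈ ℬ.rel R)

/-- Pairwise consistency of a family of view relations w.r.t. `V`. -/
def PWConsistent (V : ViewStruct σ ar A 𝒜 ν)
    (BV' : ∀ v : ν, Set (↥(V.vars v) → B)) : Prop :=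
  ∀ v1 v2 : ν, (V.vars v1 ∩ V.vars v2).Nonempty →
    restr Set.inter_subset_left '' BV' v1 = restr Set.inter_subset_right '' BV' v2

/-- `GAC V BV`: the largest pairwise consistent sub-structure of `BV`
(defined as the union of all pairwise consistent sub-structures). -/
def GAC (V : ViewStruct σ ar A 𝒜 ν) (BV : ∀ v : ν, Set (↥(V.vars v) → B)) :
    ∀ v : ν, Set (↥(V.vars v) → B) :=
  fun v => { g | ∃ BV' : ∀ w : ν, Set (↥(V.vars w) → B),
    (∀ w, BV' w ⊆ BV w) ∧ PWConsistent V BV' ∧ g ∈ BV' v }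

/-- `h` is a homomorphism from the v-structure `𝒜_V` to `ℬ_V` (reading the single
tuple of each view as an assignment). -/
def IsViewHom (V : ViewStruct σ ar A 𝒜 ν) (BV : ∀ v : ν, Set (↥(V.vars v) → B))
    (h : A → B) : Prop :=
  ∀ v : ν, (V.vars v).restrict h ∈ BV v

/-- The hyperedges of the hypergraph `ℋ_𝒜` of a structure `𝒜`. -/
def structEdges (𝒜 : RelStruct σ ar A) : Set (Set A) :=
  { e | ∃ (R : σ) (t : Fin (ar R) → A), t ∈ 𝒜.rel R ∧ e = Set.range t }

/-- The hyperedges of the hypergraph `ℋ_{𝒜_V}` of a v-structure. -/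
def viewEdges (V : ViewStruct σ ar A 𝒜 ν) : Set (Set A) := Set.range V.vars

/-- `H1 ≤ H2`: every hyperedge of `H1` is contained in some hyperedge of `H2`. -/
def HypLE (H1 H2 : Set (Set A)) : Prop := ∀ e ∈ H1, ∃ e' ∈ H2, e ⊆ e'

/-- `T` is a join tree of the hypergraph with hyperedges `H`. -/
def IsJoinTree (H : Set (Set A)) (T : SimpleGraph ↥H) : Prop :=
  T.IsTree ∧ ∀ (X : A) (e1 e2 : ↥H), X ∈ (e1 : Set A) → X ∈ (e2 : Set A) →
    ∀ p : T.Walk e1 e2, p.IsPath → ∀ e ∈ p.support, X ∈ (e : Set A)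

/-- A hypergraph is acyclic iff it has a join tree. -/
def AcyclicHyp (H : Set (Set A)) : Prop := ∃ T : SimpleGraph ↥H, IsJoinTree H T

/-- `(H1, H2)` has a tree projection. -/
def HasTreeProjection (H1 H2 : Set (Set A)) : Prop :=
  ∃ Ha : Set (Set A), AcyclicHyp Ha ∧ HypLE H1 Ha ∧ HypLE Ha H2

/-- `𝒜 ⊎ 𝕊_O`, where the single tuple `t` (of length `r`) enumerates `O`. -/
def addRel (𝒜 : RelStruct σ ar A) (r : ℕ) (t : Fin r → A) :
    RelStruct (σ ⊕ Unit) (Sum.elim ar fun _ => r) A where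
  rel := fun R => match R with
    | Sum.inl R => 𝒜.rel R
    | Sum.inr _ => {t}

/-- `𝒜 ⊎ ⨄_{X ∈ O} 𝕊_{{X}}`. -/
def addSingles (𝒜 : RelStruct σ ar A) (O : Set A) :
    RelStruct (σ ⊕ ↥O) (Sum.elim ar fun _ => 1) A where
  rel := fun R => match R with
    | Sum.inl R => 𝒜.rel R
    | Sum.inr X => {fun _ => (X : A)}

/-- `O` is tp-covered in the v-structure `V`. -/
def TpCovered (V : ViewStruct σ ar A 𝒜 ν) (O : Set A) : Prop :=
  ∃ (r : ℕ) (t : Fin r → A), Function.Injective t ∧ Set.range t = O ∧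
    ∃ 𝒜' : RelStruct (σ ⊕ Unit) (Sum.elim ar fun _ => r) A,
      IsCoreOf 𝒜' (addRel 𝒜 r t) ∧
      HasTreeProjection (structEdges 𝒜') (viewEdges V)

/-- The assignments on `W` that satisfy all constraints of `𝒜` whose variables
all lie in `W` (interpreted in `ℬ`). -/
def solsOn (𝒜 : RelStruct σ ar A) (ℬ : RelStruct σ ar B) (W : Set A) :
    Set (↥W → B) :=
  { g | ∀ (R : σ) (t : Fin (ar R) → A), t ∈ 𝒜.rel R →
      ∀ hsub : ∀ i, t i ∈ W, (fun i => g ⟨t i, hsub i⟩) ∈ ℬ.rel R }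

/-- The constraints of `𝒜`. -/
def Cst (𝒜 : RelStruct σ ar A) : Type := Σ R : σ, {t : Fin (ar R) → A // t ∈ 𝒜.rel R}

/-- The variables of a constraint. -/
def cstVars (c : Cst 𝒜) : Set A := Set.range c.2.1

/-- Index type for the views of `ℓ-tw_k`: the nonempty sets of at most `k` variables. -/
def twIdx (A : Type) (k : ℕ) : Type := {W : Set A // W.Nonempty ∧ W.Finite ∧ W.ncard ≤ k}

/-- The v-structure `ℓ-tw_k(𝒜)`. -/
def twViews (𝒜 : RelStruct σ ar A) (k : ℕ) :
    ViewStruct σ ar A 𝒜 (twIdx A k ⊕ Cst 𝒜) where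
  vars := Sum.elim (fun W => W.1) cstVars
  base := fun R t ht => Sum.inr ⟨R, ⟨t, ht⟩⟩
  base_vars := fun _ _ _ => rfl

/-- The legal structure `r-tw_k(𝒜,ℬ)`. -/
def rtw (𝒜 : RelStruct σ ar A) (ℬ : RelStruct σ ar B) (k : ℕ) :
    ∀ v : twIdx A k ⊕ Cst 𝒜, Set (↥((twViews 𝒜 k).vars v) → B) :=
  fun v => solsOn 𝒜 ℬ ((twViews 𝒜 k).vars v)

/-- Index type for the views of `ℓ-hw_k`: nonempty sets of at most `k` constraints. -/
def hwIdx (𝒜 : RelStruct σ ar A) (k : ℕ) : Type :=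
  {C : Finset (Cst 𝒜) // C.Nonempty ∧ C.card ≤ k}

/-- The variables occurring in a set of constraints. -/
def hwVars (C : Finset (Cst 𝒜)) : Set A := ⋃ c ∈ C, cstVars c

/-- The v-structure `ℓ-hw_k(𝒜)` (for `k ≥ 1`). -/
def hwViews (𝒜 : RelStruct σ ar A) (k : ℕ) (hk : 1 ≤ k) :
    ViewStruct σ ar A 𝒜 (hwIdx 𝒜 k) where
  vars := fun C => hwVars C.1
  base := fun R t ht => ⟨{⟨R, ⟨t, ht⟩⟩}, Finset.singleton_nonempty _, (Finset.card_singleton _).le.trans hk⟩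
  base_vars := fun R t ht => by
    ext x; simp only [hwVars, cstVars, Set.mem_iUnion, exists_prop]
    exact ⟨by rintro ⟨c, hc, hx⟩; obtain rfl := Finset.mem_singleton.mp hc; exact hx,
      fun hx => ⟨⟨R, ⟨t, ht⟩⟩, Finset.mem_singleton_self _, hx⟩⟩

/-- The legal structure `r-hw_k(𝒜,ℬ)`: each view holds the solutions of its subproblem. -/
def rhw (𝒜 : RelStruct σ ar A) (ℬ : RelStruct σ ar B) (k : ℕ) (hk : 1 ≤ k) :
    ∀ C : hwIdx 𝒜 k, Set (↥((hwViews 𝒜 k hk).vars C) → B) :=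
  fun C => { g | ∀ (c : Cst 𝒜) (hc : c ∈ C.1),
    (fun i => g ⟨c.2.1 i, Set.mem_iUnion₂.mpr ⟨c, hc, Set.mem_range_self i⟩⟩) ∈ ℬ.rel c.1 }

/-- Replace the relation of symbol `dR` in `ℬ` by `s`. -/
noncomputable def replaceRel (ℬ : RelStruct σ ar B) (dR : σ)
    (s : Set (Fin (ar dR) → B)) : RelStruct σ ar B :=
  letI := Classical.decEq σ
  ⟨Function.update ℬ.rel dR s⟩

/-- Replace the relation of view `v0` by `s`. -/
noncomputable def updateView (V : ViewStruct σ ar A 𝒜 ν)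
    (BV : ∀ v : ν, Set (↥(V.vars v) → B)) (v0 : ν) (s : Set (↥(V.vars v0) → B)) :
    ∀ v : ν, Set (↥(V.vars v) → B) :=
  letI := Classical.decEq ν
  Function.update BV v0 s

/-- The Gaifman graph of a structure. -/
def gaifman (𝒜 : RelStruct σ ar A) : SimpleGraph A where
  Adj u v := u ≠ v ∧ ∃ (R : σ) (t : Fin (ar R) → A),
      t ∈ 𝒜.rel R ∧ u ∈ Set.range t ∧ v ∈ Set.range t
  symm := ⟨fun u v h => ⟨h.1.symm, by obtain ⟨-, R, t, ht, hu, hv⟩ := h; exact ⟨R, t, ht, hv, hu⟩⟩⟩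
  loopless := ⟨fun u h => h.1 rfl⟩

/-- The `m × n` grid graph. -/
def gridGraph (m n : ℕ) : SimpleGraph (Fin m × Fin n) where
  Adj u v := Nat.dist u.1.1 v.1.1 + Nat.dist u.2.1 v.2.1 = 1
  symm := ⟨by intro u v h; simpa [Nat.dist_comm] using h⟩
  loopless := ⟨by intro u h; simp [Nat.dist_self] at h⟩

/-- Two nodes share a hyperedge of `H`. -/
def sharesEdge (H : Set (Set A)) (u w : A) : Prop := ∃ e ∈ H, u ∈ e ∧ w ∈ e

/-- The hypergraph with hyperedges `H` is connected (over the whole universe). -/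
def HypConnected (H : Set (Set A)) : Prop :=
  ∀ x y : A, Relation.ReflTransGen (sharesEdge H) x y

/-!
An endomorphism `h` of `𝒜` sends Gaifman-adjacent variables to equal or adjacent ones, so it
does not increase the `ℓ¹` distance of the grid. It fixes the four domain-restricted corners,
hence `h x` is no farther than `x` from each corner; the distances to opposite corners sum to
a constant, so all four inequalities are equalities, and the distances to the corners determine
a grid point.
-/

theorem RelStruct.ext {𝒜 ℬ : RelStruct σ ar A} (h : 𝒜.rel = ℬ.rel) : 𝒜 = ℬ := by
  cases 𝒜; cases ℬ; cases h; rfl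

namespace IsHom

variable {ℬ : RelStruct σ ar B} {h : A → B}

theorem mono {ℬ' : RelStruct σ ar B} (hh : IsHom 𝒜 ℬ' h) (hsub : SubStructOf ℬ' ℬ) :
    IsHom 𝒜 ℬ h :=
  fun R t ht => hsub R (hh R t ht)

theorem apply_eq_of_domRestricted (hh : IsHom 𝒜 ℬ h) {d : σ} {X : A} {Y : B}
    (hX : DomRestricted 𝒜 d X) (hY : DomRestricted ℬ d Y) : h X = Y := by
  have hmem := hh d (fun _ => X) (by rw [hX.2]; rfl)
  rw [hY.2, Set.mem_singleton_iff] at hmem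
  exact congrFun hmem ⟨0, by rw [hX.1]; exact Nat.one_pos⟩

theorem gaifman_adj (hh : IsHom 𝒜 ℬ h) {u v : A} (huv : (gaifman 𝒜).Adj u v) :
    h u = h v ∨ (gaifman ℬ).Adj (h u) (h v) := by
  obtain ⟨-, R, t, ht, ⟨i, rfl⟩, ⟨j, rfl⟩⟩ := huv
  by_cases heq : h (t i) = h (t j)
  · exact Or.inl heq
  · exact Or.inr ⟨heq, R, _, hh R t ht, ⟨i, rfl⟩, ⟨j, rfl⟩⟩

end IsHom

theorem not_exists_isHom_of_forall_isHom_eq_id {𝒜 𝒜' : RelStruct σ ar A}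
    (hid : ∀ h : A → A, IsHom 𝒜 𝒜 h → h = id) (hsub : SubStructOf 𝒜' 𝒜) (hne : 𝒜' ≠ 𝒜) :
    ¬ ∃ h : A → A, IsHom 𝒜 𝒜' h := by
  rintro ⟨h, hh⟩
  obtain rfl := hid h (hh.mono hsub)
  exact hne (RelStruct.ext (funext fun R => (hsub R).antisymm fun t ht => hh R t ht))

def gridDist {m n : ℕ} (u v : Fin m × Fin n) : ℕ :=
  Nat.dist u.1 v.1 + Nat.dist u.2 v.2

section Grid

variable {m n : ℕ}

theorem gridGraph_adj_iff {u v : Fin m × Fin n} : (gridGraph m n).Adj u v ↔ gridDist u v = 1 :=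
  Iff.rfl

theorem gridDist_self (u : Fin m × Fin n) : gridDist u u = 0 := by
  simp [gridDist, Nat.dist_self]

theorem gridDist_triangle (u v w : Fin m × Fin n) :
    gridDist u w ≤ gridDist u v + gridDist v w := by
  have := Nat.dist.triangle_inequality u.1 v.1 w.1
  have := Nat.dist.triangle_inequality u.2 v.2 w.2
  unfold gridDist
  omega

theorem Fin.exists_natDist_eq_one_of_ne {a b : Fin m} (hab : a ≠ b) :
    ∃ c : Fin m, Nat.dist a c = 1 ∧ Nat.dist c b + 1 = Nat.dist a b := by
  rcases lt_or_gt_of_ne (Fin.val_ne_of_ne hab) with hlt | hgt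
  · exact ⟨⟨a + 1, by omega⟩, by simp only [Nat.dist]; omega⟩
  · exact ⟨⟨a - 1, by omega⟩, by simp only [Nat.dist]; omega⟩

theorem exists_gridGraph_adj_gridDist_add_one {u v : Fin m × Fin n} (huv : u ≠ v) :
    ∃ w, (gridGraph m n).Adj u w ∧ gridDist w v + 1 = gridDist u v := by
  simp only [gridGraph_adj_iff, gridDist]
  by_cases h₁ : u.1 = v.1
  · obtain ⟨c, hc⟩ := Fin.exists_natDist_eq_one_of_ne fun h₂ => huv (Prod.ext h₁ h₂)
    exact ⟨(u.1, c), by simp only [h₁, Nat.dist_self]; omega⟩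
  · obtain ⟨c, hc⟩ := Fin.exists_natDist_eq_one_of_ne h₁
    exact ⟨(c, u.2), by simp only [Nat.dist_self]; omega⟩

theorem gridDist_apply_le_of_adj {m' n' : ℕ} {f : Fin m × Fin n → Fin m' × Fin n'}
    (hf : ∀ u w, (gridGraph m n).Adj u w → gridDist (f u) (f w) ≤ 1) (u v : Fin m × Fin n) :
    gridDist (f u) (f v) ≤ gridDist u v := by
  induction hd : gridDist u v generalizing u with
  | zero =>
    obtain rfl : u = v := by
      by_contra huv
      obtain ⟨w, -, hw⟩ := exists_gridGraph_adj_gridDist_add_one huv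
      omega
    exact (gridDist_self _).le
  | succ d ih =>
    have huv : u ≠ v := by rintro rfl; simp [gridDist_self] at hd
    obtain ⟨w, hw, hwv⟩ := exists_gridGraph_adj_gridDist_add_one huv
    calc gridDist (f u) (f v) ≤ gridDist (f u) (f w) + gridDist (f w) (f v) :=
          gridDist_triangle _ _ _
      _ ≤ 1 + d := add_le_add (hf u w hw) (ih w (by omega))
      _ = d + 1 := add_comm 1 d

theorem eq_of_gridDist_corners_le (hm : 0 < m) (hn : 0 < n) {x y : Fin m × Fin n}
    (h₁ : gridDist y (⟨0, hm⟩, ⟨0, hn⟩) ≤ gridDist x (⟨0, hm⟩, ⟨0, hn⟩))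
    (h₂ : gridDist y (⟨0, hm⟩, ⟨n - 1, by omega⟩) ≤ gridDist x (⟨0, hm⟩, ⟨n - 1, by omega⟩))
    (h₃ : gridDist y (⟨m - 1, by omega⟩, ⟨0, hn⟩) ≤ gridDist x (⟨m - 1, by omega⟩, ⟨0, hn⟩))
    (h₄ : gridDist y (⟨m - 1, by omega⟩, ⟨n - 1, by omega⟩) ≤
      gridDist x (⟨m - 1, by omega⟩, ⟨n - 1, by omega⟩)) :
    y = x := by
  have := x.1.2; have := x.2.2; have := y.1.2; have := y.2.2
  simp only [gridDist, Nat.dist] at h₁ h₂ h₃ h₄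
  exact Prod.ext (Fin.ext (by omega)) (Fin.ext (by omega))

end Grid

theorem IsHom.gridDist_le {m n m' n' : ℕ} {𝒜 : RelStruct σ ar (Fin m × Fin n)}
    {ℬ : RelStruct σ ar (Fin m' × Fin n')} {h : Fin m × Fin n → Fin m' × Fin n'}
    (hh : IsHom 𝒜 ℬ h) (h𝒜 : gaifman 𝒜 = gridGraph m n) (hℬ : gaifman ℬ = gridGraph m' n')
    (u v : Fin m × Fin n) : gridDist (h u) (h v) ≤ gridDist u v := by
  refine gridDist_apply_le_of_adj (fun u w huw => ?_) u v
  rcases hh.gaifman_adj (h𝒜 ▸ huw) with heq | hadj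
  · simp [heq, gridDist_self]
  · exact (gridGraph_adj_iff.mp (hℬ ▸ hadj)).le

/-- a structure whose Gaifman graph is a grid and whose four
corners are domain restricted has only the identity endomorphism; hence it has
no homomorphism to a proper substructure, i.e., it is a core. -/
theorem statement12
    (k₁ k₂ : ℕ) (hk₁ : 2 ≤ k₁) (hk₂ : 2 ≤ k₂)
    (𝒜 : RelStruct σ ar (Fin k₁ × Fin k₂))
    (hg : gaifman 𝒜 = gridGraph k₁ k₂)
    (hc₁ : ∃ d : σ, DomRestricted 𝒜 d (⟨0, by omega⟩, ⟨0, by omega⟩))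
    (hc₂ : ∃ d : σ, DomRestricted 𝒜 d (⟨0, by omega⟩, ⟨k₂ - 1, by omega⟩))
    (hc₃ : ∃ d : σ, DomRestricted 𝒜 d (⟨k₁ - 1, by omega⟩, ⟨0, by omega⟩))
    (hc₄ : ∃ d : σ, DomRestricted 𝒜 d (⟨k₁ - 1, by omega⟩, ⟨k₂ - 1, by omega⟩)) :
    (∀ h : Fin k₁ × Fin k₂ → Fin k₁ × Fin k₂, IsHom 𝒜 𝒜 h → h = id) ∧
    (∀ 𝒜' : RelStruct σ ar (Fin k₁ × Fin k₂), SubStructOf 𝒜' 𝒜 → 𝒜' ≠ 𝒜 →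
      ¬ ∃ h : Fin k₁ × Fin k₂ → Fin k₁ × Fin k₂, IsHom 𝒜 𝒜' h) := by
  have hid : ∀ h : Fin k₁ × Fin k₂ → Fin k₁ × Fin k₂, IsHom 𝒜 𝒜 h → h = id := by
    intro h hh
    funext x
    have near : ∀ c, (∃ d, DomRestricted 𝒜 d c) → gridDist (h x) c ≤ gridDist x c := by
      rintro c ⟨d, hd⟩
      simpa only [hh.apply_eq_of_domRestricted hd hd] using hh.gridDist_le hg hg x c
    exact eq_of_gridDist_corners_le (by omega) (by omega)
      (near _ hc₁) (near _ hc₂) (near _ hc₃) (near _ hc₄)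
  exact ⟨hid, fun _ => not_exists_isHom_of_forall_isHom_eq_id hid⟩
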